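/- Let X = (X_t)_{t∈ℤ} be a 𝒳-valued stochastic process on a probability space (Ω, ℱ, P), let S₀ : Ω → 𝒮 be measurable and independent of the σ-algebra generated by the whole process X, and define S_{k+1} = F(X_k, S_k) for k ≥ 0, where F : 𝒳 × 𝒮 → 𝒮 is measurable. For k ≥ 0 let Z_k : Ω → 𝒳^ℕ be the past at time k, Z_k(ω) = (n ↦ X_{k−n}(ω)). Then the pair sequence (Z_k, S_k) is a Markov process: for every k ≥ 0 and every bounded measurable g : 𝒳^ℕ × 𝒮 → ℝ, the conditional expectation E[g(Z_{k+1}, S_{k+1}) | σ(Z_m, S_m : 0 ≤ m ≤ k)] equals E[g(Z_{k+1}, S_{k+1}) | σ(Z_k, S_k)] P-almost surely. -/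

import Mathlib

/-!
Up to time `k` everything is a measurable function of `(Z_k, S₀)`: the past `Z_m` is a shift of
`Z_k`, and `S_m` is obtained by running the recursion on the symbols `X_0, …, X_{m-1}`, which are
entries of `Z_k`. Hence `σ(Z_k, S_k) ≤ σ(history) ≤ σ(Z_k, S₀)`. The next pair is a function of
`(Z_k, S_k, X_{k+1})`, and `(Z_k, X_{k+1})` is independent of `S₀`, so the conditional law of
`X_{k+1}` given `(Z_k, S₀)` is its conditional law given `Z_k` alone. Conditioning on `(Z_k, S₀)`
therefore yields a function of `(Z_k, S_k)`, and the tower property squeezes the two conditional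
expectations of the theorem together.
-/

open MeasureTheory ProbabilityTheory Filter

section
variable {Ω β γ δ E : Type*} {mΩ : MeasurableSpace Ω} {mβ : MeasurableSpace β}
  {mγ : MeasurableSpace γ} {mδ : MeasurableSpace δ} [StandardBorelSpace γ] [Nonempty γ]
  [NormedAddCommGroup E] [NormedSpace ℝ E] [CompleteSpace E]
  {μ : Measure Ω} [IsFiniteMeasure μ] {Y : Ω → β} {U : Ω → δ} {V : Ω → γ}

lemma map_prod_eq_compProd_prodMkRight_of_indepFun (hY : Measurable Y) (hU : Measurable U)
    (hV : Measurable V) (h : IndepFun (fun ω => (Y ω, V ω)) U μ) :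
    μ.map (fun ω => ((Y ω, U ω), V ω)) =
      μ.map (fun ω => (Y ω, U ω)) ⊗ₘ (condDistrib V Y μ).prodMkRight δ := by
  have hYU : μ.map (fun ω => (Y ω, U ω)) = (μ.map Y).prod (μ.map U) :=
    (indepFun_iff_map_prod_eq_prod_map_map hY.aemeasurable hU.aemeasurable).mp
      (h.comp measurable_fst measurable_id)
  refine Measure.ext_prod₃' fun {s t u} hs ht hu => ?_
  rw [hYU, Measure.compProd_apply_prod (hs.prod ht) hu, ← Measure.prod_restrict,
    Measure.map_apply (by fun_prop) ((hs.prod ht).prod hu)]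
  have hpre : (fun ω => ((Y ω, U ω), V ω)) ⁻¹' ((s ×ˢ t) ×ˢ u) =
      (fun ω => (Y ω, V ω)) ⁻¹' (s ×ˢ u) ∩ U ⁻¹' t := by
    ext ω; simp [and_right_comm]
  -- both sides are `(∫⁻ y in s, condDistrib V Y μ y u ∂μ.map Y) * μ.map U t`
  rw [hpre, h.measure_inter_preimage_eq_mul _ _ (hs.prod hu) ht]
  have hκ : Measurable fun y => condDistrib V Y μ y u := Kernel.measurable_coe _ hu
  rw [← Measure.map_apply (by fun_prop) (hs.prod hu), ← compProd_map_condDistrib hV.aemeasurable,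
    Measure.compProd_apply_prod hs hu, ← Measure.map_apply hU ht, ← setLIntegral_one,
    ← lintegral_prod_mul hκ.aemeasurable aemeasurable_const]
  simp [Kernel.prodMkRight_apply]

lemma condDistrib_ae_eq_prodMkRight_of_indepFun (hY : Measurable Y) (hU : Measurable U)
    (hV : Measurable V) (h : IndepFun (fun ω => (Y ω, V ω)) U μ) :
    condDistrib V (fun ω => (Y ω, U ω)) μ =ᵐ[μ.map fun ω => (Y ω, U ω)]
      (condDistrib V Y μ).prodMkRight δ :=
  condDistrib_ae_eq_of_measure_eq_compProd_of_measurable (hY.prodMk hU) hV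
    (map_prod_eq_compProd_prodMkRight_of_indepFun hY hU hV h)

lemma condExp_ae_eq_integral_condDistrib_of_indepFun (hY : Measurable Y) (hU : Measurable U)
    (hV : Measurable V) (h : IndepFun (fun ω => (Y ω, V ω)) U μ)
    {f : (β × δ) × γ → E} (hf : StronglyMeasurable f)
    (hf_int : Integrable (fun ω => f ((Y ω, U ω), V ω)) μ) :
    μ[fun ω => f ((Y ω, U ω), V ω) | MeasurableSpace.comap (fun ω => (Y ω, U ω)) inferInstance]
      =ᵐ[μ] fun ω => ∫ v, f ((Y ω, U ω), v) ∂condDistrib V Y μ (Y ω) := by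
  filter_upwards [condExp_prod_ae_eq_integral_condDistrib (hY.prodMk hU) hV.aemeasurable hf hf_int,
    ae_of_ae_map (hY.prodMk hU).aemeasurable
      (condDistrib_ae_eq_prodMkRight_of_indepFun hY hU hV h)] with ω hω hκ
  rw [hω, hκ, Kernel.prodMkRight_apply]

lemma condExp_ae_eq_condExp_of_le {m m' : MeasurableSpace Ω} {f : Ω → E} (hm : m ≤ m')
    (hm' : m' ≤ mΩ) (h : AEStronglyMeasurable[m] (μ[f | m']) μ) :
    μ[f | m] =ᵐ[μ] μ[f | m'] :=
  (condExp_condExp_of_le hm hm').symm.trans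
    (condExp_of_aestronglyMeasurable' (hm.trans hm') h integrable_condExp)

lemma condExp_ae_eq_condExp_of_le_of_condExp_ae_eq {m₁ m₂ m₃ : MeasurableSpace Ω} {f h : Ω → E}
    (h₁₂ : m₁ ≤ m₂) (h₂₃ : m₂ ≤ m₃) (h₃ : m₃ ≤ mΩ) (hh : StronglyMeasurable[m₁] h)
    (hf : μ[f | m₃] =ᵐ[μ] h) :
    μ[f | m₂] =ᵐ[μ] μ[f | m₁] := by
  have hm : AEStronglyMeasurable[m₁] (μ[f | m₃]) μ := hh.aestronglyMeasurable.congr hf.symm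
  exact (condExp_ae_eq_condExp_of_le h₂₃ h₃ (hm.mono h₁₂)).trans
    (condExp_ae_eq_condExp_of_le (h₁₂.trans h₂₃) h₃ hm).symm

end

section
variable {α 𝒳 𝒮 : Type*}

def seqCons (a : α) (z : ℕ → α) : ℕ → α
  | 0 => a
  | n + 1 => z n

@[fun_prop]
lemma measurable_seqCons [MeasurableSpace α] :
    Measurable fun p : α × (ℕ → α) => seqCons p.1 p.2 :=
  measurable_pi_lambda _ fun n => by
    cases n with
    | zero => exact measurable_fst
    | succ n => exact (measurable_pi_apply n).comp measurable_snd

def runState (F : 𝒳 × 𝒮 → 𝒮) (s : 𝒮) (x : ℕ → 𝒳) : ℕ → 𝒮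
  | 0 => s
  | m + 1 => F (x m, runState F s x m)

lemma runState_congr {F : 𝒳 × 𝒮 → 𝒮} {s : 𝒮} {x y : ℕ → 𝒳} {m : ℕ}
    (h : ∀ j < m, x j = y j) : runState F s x m = runState F s y m := by
  induction m with
  | zero => rfl
  | succ m ih =>
    simp only [runState, h m m.lt_succ_self, ih fun j hj => h j (hj.trans m.lt_succ_self)]

@[fun_prop]
lemma measurable_runState [MeasurableSpace 𝒳] [MeasurableSpace 𝒮] {F : 𝒳 × 𝒮 → 𝒮}
    (hF : Measurable F) (m : ℕ) : Measurable fun p : 𝒮 × (ℕ → 𝒳) => runState F p.1 p.2 m := by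
  induction m with
  | zero => exact measurable_fst
  | succ m ih => exact hF.comp (((measurable_pi_apply m).comp measurable_snd).prodMk ih)

end

section
variable {Ω 𝒳 𝒮 : Type*} {X : ℤ → Ω → 𝒳} {S0 : Ω → 𝒮} {F : 𝒳 × 𝒮 → 𝒮} {S : ℕ → Ω → 𝒮}
  {Z : ℕ → Ω → ℕ → 𝒳}

lemma measurable_past [MeasurableSpace Ω] [MeasurableSpace 𝒳] (hX : ∀ t, Measurable (X t))
    (hZ : ∀ (k : ℕ) (ω : Ω) (n : ℕ), Z k ω n = X ((k : ℤ) - (n : ℤ)) ω) (m : ℕ) :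
    Measurable (Z m) :=
  measurable_pi_lambda _ fun n => by simpa only [hZ] using hX _

lemma state_eq_runState (hS_zero : S 0 = S0)
    (hS_succ : ∀ (k : ℕ) (ω : Ω), S (k + 1) ω = F (X (k : ℤ) ω, S k ω)) (m : ℕ) (ω : Ω) :
    S m ω = runState F (S0 ω) (fun j => X j ω) m := by
  induction m with
  | zero => rw [hS_zero]; rfl
  | succ m ih => rw [hS_succ, ih]; rfl

lemma state_eq_runState_past (hS_zero : S 0 = S0)
    (hS_succ : ∀ (k : ℕ) (ω : Ω), S (k + 1) ω = F (X (k : ℤ) ω, S k ω))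
    (hZ : ∀ (k : ℕ) (ω : Ω) (n : ℕ), Z k ω n = X ((k : ℤ) - (n : ℤ)) ω)
    {m k : ℕ} (hmk : m ≤ k) (ω : Ω) :
    S m ω = runState F (S0 ω) (fun j => Z k ω (k - j)) m := by
  rw [state_eq_runState hS_zero hS_succ]
  refine runState_congr fun j hj => ?_
  rw [hZ, Nat.cast_sub (by omega), sub_sub_cancel]

lemma past_eq_shift (hZ : ∀ (k : ℕ) (ω : Ω) (n : ℕ), Z k ω n = X ((k : ℤ) - (n : ℤ)) ω)
    {m k : ℕ} (hmk : m ≤ k) (ω : Ω) : Z m ω = fun n => Z k ω (n + (k - m)) := by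
  funext n
  rw [hZ, hZ]
  congr 1
  push_cast [hmk]
  ring

lemma past_succ (hZ : ∀ (k : ℕ) (ω : Ω) (n : ℕ), Z k ω n = X ((k : ℤ) - (n : ℤ)) ω)
    (k : ℕ) (ω : Ω) : Z (k + 1) ω = seqCons (X (k + 1 : ℕ) ω) (Z k ω) := by
  funext n
  cases n with
  | zero => rw [hZ]; rfl
  | succ n =>
    change Z (k + 1) ω (n + 1) = Z k ω n
    rw [hZ, hZ]
    push_cast
    ring_nf

lemma iSup_comap_le_comap_past_initial [MeasurableSpace 𝒳] [MeasurableSpace 𝒮]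
    (hF : Measurable F) (hS_zero : S 0 = S0)
    (hS_succ : ∀ (k : ℕ) (ω : Ω), S (k + 1) ω = F (X (k : ℤ) ω, S k ω))
    (hZ : ∀ (k : ℕ) (ω : Ω) (n : ℕ), Z k ω n = X ((k : ℤ) - (n : ℤ)) ω) (k : ℕ) :
    ⨆ m : Fin (k + 1), MeasurableSpace.comap (fun ω => (Z (m : ℕ) ω, S (m : ℕ) ω)) inferInstance
      ≤ MeasurableSpace.comap (fun ω => (Z k ω, S0 ω)) inferInstance := by
  refine iSup_le fun m => ?_
  have hmk : (m : ℕ) ≤ k := Nat.lt_succ_iff.mp m.isLt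
  let θ : (ℕ → 𝒳) × 𝒮 → (ℕ → 𝒳) × 𝒮 := fun p =>
    (fun n => p.1 (n + (k - m)), runState F p.2 (fun j => p.1 (k - j)) m)
  have hθ : Measurable θ := by fun_prop (disch := assumption)
  exact MeasurableSpace.comap_le_comap_of_eq_comp θ hθ <| funext fun ω =>
    Prod.ext (past_eq_shift hZ hmk ω) (state_eq_runState_past hS_zero hS_succ hZ hmk ω)

lemma indepFun_past_next_initial [MeasurableSpace Ω] [MeasurableSpace 𝒳] [MeasurableSpace 𝒮]
    {P : Measure Ω} (hindep : IndepFun S0 (fun ω (t : ℤ) => X t ω) P)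
    (hZ : ∀ (k : ℕ) (ω : Ω) (n : ℕ), Z k ω n = X ((k : ℤ) - (n : ℤ)) ω) (k : ℕ) :
    IndepFun (fun ω => (Z k ω, X (k + 1 : ℕ) ω)) S0 P := by
  have hpair : (fun ω => (Z k ω, X (k + 1 : ℕ) ω)) =
      (fun x : ℤ → 𝒳 => (fun n : ℕ => x (k - n), x (k + 1 : ℕ))) ∘ fun ω t => X t ω :=
    funext fun ω => Prod.ext (funext (hZ k ω)) rfl
  rw [hpair]
  exact hindep.symm.comp (by fun_prop) measurable_id

lemma condExp_next_ae_eq_integral_condDistrib [MeasurableSpace Ω] [MeasurableSpace 𝒳]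
    [StandardBorelSpace 𝒳] [Nonempty 𝒳] [MeasurableSpace 𝒮] (P : Measure Ω) [IsFiniteMeasure P]
    (hX : ∀ t, Measurable (X t)) (hS0 : Measurable S0)
    (hindep : IndepFun S0 (fun ω (t : ℤ) => X t ω) P) (hF : Measurable F)
    (hS_zero : S 0 = S0) (hS_succ : ∀ (k : ℕ) (ω : Ω), S (k + 1) ω = F (X (k : ℤ) ω, S k ω))
    (hZ : ∀ (k : ℕ) (ω : Ω) (n : ℕ), Z k ω n = X ((k : ℤ) - (n : ℤ)) ω)
    {g : (ℕ → 𝒳) × 𝒮 → ℝ} (hg : Measurable g) {C : ℝ} (hgC : ∀ y, |g y| ≤ C) (k : ℕ) :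
    P[fun ω => g (Z (k + 1) ω, S (k + 1) ω) |
        MeasurableSpace.comap (fun ω => (Z k ω, S0 ω)) inferInstance] =ᵐ[P]
      fun ω => ∫ x, g (seqCons x (Z k ω), F (Z k ω 0, S k ω))
        ∂condDistrib (X (k + 1 : ℕ)) (Z k) P (Z k ω) := by
  let f : ((ℕ → 𝒳) × 𝒮) × 𝒳 → ℝ := fun p =>
    g (seqCons p.2 p.1.1, F (p.1.1 0, runState F p.1.2 (fun j => p.1.1 (k - j)) k))
  have hnext (ω : Ω) : g (Z (k + 1) ω, S (k + 1) ω) = f ((Z k ω, S0 ω), X (k + 1 : ℕ) ω) := by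
    have hZ0 : Z k ω 0 = X k ω := by rw [hZ, Nat.cast_zero, sub_zero]
    rw [past_succ hZ, hS_succ, state_eq_runState_past hS_zero hS_succ hZ le_rfl, ← hZ0]
  have hf : Measurable f := by fun_prop (disch := assumption)
  have hZk := measurable_past hX hZ k
  have hint : Integrable (fun ω => f ((Z k ω, S0 ω), X (k + 1 : ℕ) ω)) P :=
    .of_bound (hf.comp ((hZk.prodMk hS0).prodMk (hX _))).aestronglyMeasurable C
      (ae_of_all _ fun ω => (Real.norm_eq_abs _).trans_le (hgC _))
  simp_rw [hnext]
  filter_upwards [condExp_ae_eq_integral_condDistrib_of_indepFun hZk hS0 (hX _)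
    (indepFun_past_next_initial hindep hZ k) hf.stronglyMeasurable hint] with ω hω
  rw [hω, state_eq_runState_past hS_zero hS_succ hZ le_rfl]

end

theorem pair_process_is_markov
    {Ω : Type*} [MeasurableSpace Ω] (P : Measure Ω) [IsProbabilityMeasure P]
    {𝒳 : Type*} [TopologicalSpace 𝒳] [PolishSpace 𝒳] [MeasurableSpace 𝒳] [BorelSpace 𝒳]
    {𝒮 : Type*} [MeasurableSpace 𝒮]
    (X : ℤ → Ω → 𝒳) (hX : ∀ t, Measurable (X t))
    (S0 : Ω → 𝒮) (hS0 : Measurable S0)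
    (hindep : IndepFun S0 (fun ω (t : ℤ) => X t ω) P)
    (F : 𝒳 × 𝒮 → 𝒮) (hF : Measurable F)
    (S : ℕ → Ω → 𝒮)
    (hS_zero : S 0 = S0)
    (hS_succ : ∀ (k : ℕ) (ω : Ω), S (k + 1) ω = F (X (k : ℤ) ω, S k ω))
    (Z : ℕ → Ω → ℕ → 𝒳)
    (hZ : ∀ (k : ℕ) (ω : Ω) (n : ℕ), Z k ω n = X ((k : ℤ) - (n : ℤ)) ω)
    (g : (ℕ → 𝒳) × 𝒮 → ℝ) (hg : Measurable g) (hgb : ∃ C, ∀ y, |g y| ≤ C)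
    (k : ℕ) :
    P[fun ω => g (Z (k + 1) ω, S (k + 1) ω) |
        ⨆ m : Fin (k + 1), MeasurableSpace.comap (fun ω => (Z (m : ℕ) ω, S (m : ℕ) ω)) inferInstance]
      =ᵐ[P]
    P[fun ω => g (Z (k + 1) ω, S (k + 1) ω) |
        MeasurableSpace.comap (fun ω => (Z k ω, S k ω)) inferInstance] := by
  obtain ⟨C, hC⟩ := hgb
  have : Nonempty 𝒳 := ⟨X 0 (nonempty_of_isProbabilityMeasure P).some⟩
  have hΨ : StronglyMeasurable fun q : (ℕ → 𝒳) × 𝒮 =>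
      ∫ x, g (seqCons x q.1, F (q.1 0, q.2)) ∂condDistrib (X (k + 1 : ℕ)) (Z k) P q.1 :=
    StronglyMeasurable.integral_kernel_prod_right'
      (κ := (condDistrib (X (k + 1 : ℕ)) (Z k) P).prodMkRight 𝒮)
      (f := fun p : ((ℕ → 𝒳) × 𝒮) × 𝒳 => g (seqCons p.2 p.1.1, F (p.1.1 0, p.1.2))) (by fun_prop)
  exact condExp_ae_eq_condExp_of_le_of_condExp_ae_eq (le_iSup_of_le (Fin.last k) le_rfl)
    (iSup_comap_le_comap_past_initial hF hS_zero hS_succ hZ k)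
    ((measurable_past hX hZ k).prodMk hS0).comap_le (hΨ.comp_measurable (comap_measurable _))
    (condExp_next_ae_eq_integral_condDistrib P hX hS0 hindep hF hS_zero hS_succ hZ hg hC k)
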